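/- arXiv:2410.00162 — 2 statements merged into one kernel-verified Lean document; each statement's English description precedes it below -/
import Mathlib

section
/- Let X, Y be normed spaces of functions on Ω with norms ‖·‖_W and ‖·‖_L respectively, and suppose for every ε > 0 there exists m₀ such that ‖u‖_L^q ≤ ε ‖u‖_W^q + ‖u‖_{L,m₀}^q for all u ∈ X (where ‖·‖_{L,m} are seminorms). If for each m the map X → (seminormed space with ‖·‖_{L,m}) sends bounded sequences to sequences with Cauchy subsequences, then every bounded sequence in X has a subsequence that is Cauchy in ‖·‖_L. -/
/-- Abstract compactness-by-exhaustion principle (Lemma 3.3(i)).  `W` is the norm of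
the Sobolev space, `L` the norm of the target Lebesgue space, and `Lm m` the seminorm
obtained by restricting `L` to the `m`-th piece of an exhaustion.  If for every `ε > 0`
there is `m₀` with `L u ^ q ≤ ε * W u ^ q + Lm m₀ u ^ q` for all `u`, and if for each `m`
every `W`-bounded sequence has a subsequence which is Cauchy for `Lm m`, then every
`W`-bounded sequence has a subsequence which is Cauchy for `L`. -/
theorem compactness_by_exhaustion {X : Type*} [AddCommGroup X]
    (W L : X → ℝ) (Lm : ℕ → X → ℝ) (q : ℝ) (hq : 1 ≤ q)
    (hW0 : ∀ x, 0 ≤ W x) (hL0 : ∀ x, 0 ≤ L x) (hLm0 : ∀ m x, 0 ≤ Lm m x)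
    (hWtri : ∀ x y, W (x - y) ≤ W x + W y)
    (hsplit : ∀ ε : ℝ, 0 < ε → ∃ m₀ : ℕ, ∀ u : X,
      L u ^ q ≤ ε * W u ^ q + Lm m₀ u ^ q)
    (hcpt : ∀ m : ℕ, ∀ u : ℕ → X, (∃ C : ℝ, ∀ i, W (u i) ≤ C) →
      ∃ φ : ℕ → ℕ, StrictMono φ ∧
        ∀ ε : ℝ, 0 < ε → ∃ N, ∀ i ≥ N, ∀ j ≥ N, Lm m (u (φ i) - u (φ j)) < ε) :
    ∀ u : ℕ → X, (∃ C : ℝ, ∀ i, W (u i) ≤ C) →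
      ∃ φ : ℕ → ℕ, StrictMono φ ∧
        ∀ ε : ℝ, 0 < ε → ∃ N, ∀ i ≥ N, ∀ j ≥ N, L (u (φ i) - u (φ j)) < ε := by
  intro u hu
  obtain ⟨C, hC⟩ := hu
  set C' : ℝ := max C 0 with hC'def
  have hC'0 : (0:ℝ) ≤ C' := le_max_right _ _
  have hCbd : ∀ i, W (u i) ≤ C' := fun i => (hC i).trans (le_max_left _ _)
  have hq' : (0:ℝ) < q := lt_of_lt_of_le one_pos hq
  choose m hm using fun k : ℕ => hsplit (1 / ((k:ℝ)+1)) (by positivity)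
  have step : ∀ (k : ℕ) (f : ℕ → ℕ),
      ∃ σ : ℕ → ℕ, StrictMono σ ∧ ∀ ε : ℝ, 0 < ε → ∃ N, ∀ i ≥ N, ∀ j ≥ N,
        Lm (m k) (u (f (σ i)) - u (f (σ j))) < ε := by
    intro k f
    exact hcpt (m k) (u ∘ f) ⟨C', fun i => hCbd _⟩
  let Φ : ℕ → (ℕ → ℕ) := fun k => Nat.rec id (fun k F => F ∘ (step k F).choose) k
  have hΦs : ∀ k, Φ (k+1) = Φ k ∘ (step k (Φ k)).choose := fun k => rfl
  have hσmono : ∀ k, StrictMono (step k (Φ k)).choose := fun k => (step k (Φ k)).choose_spec.1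
  have hσle : ∀ k s, s ≤ (step k (Φ k)).choose s := fun k s => (hσmono k).le_apply
  have hΦmono : ∀ k, StrictMono (Φ k) := by
    intro k; induction k with
    | zero => exact strictMono_id
    | succ k ih => rw [hΦs]; exact ih.comp (hσmono k)
  have hcauchy : ∀ k, ∀ ε : ℝ, 0 < ε → ∃ N, ∀ i ≥ N, ∀ j ≥ N,
      Lm (m k) (u (Φ (k+1) i) - u (Φ (k+1) j)) < ε := by
    intro k; exact (step k (Φ k)).choose_spec.2
  have hkey : ∀ n, ∀ k, k ≤ n → ∀ s, ∃ r, s ≤ r ∧ Φ (n+1) s = Φ (k+1) r := by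
    intro n
    induction n with
    | zero =>
      intro k hk s
      obtain rfl := Nat.le_zero.mp hk
      exact ⟨s, le_refl s, rfl⟩
    | succ n ih =>
      intro k hk s
      rcases Nat.lt_or_ge k (n+1) with h | h
      · have hkn : k ≤ n := Nat.lt_succ_iff.mp h
        obtain ⟨r, hr, heq⟩ := ih k hkn ((step (n+1) (Φ (n+1))).choose s)
        refine ⟨r, le_trans (hσle (n+1) s) hr, ?_⟩
        rw [hΦs (n+1)]
        exact heq
      · have hkeq : k = n+1 := le_antisymm hk h
        subst hkeq
        exact ⟨s, le_refl s, rfl⟩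
  refine ⟨fun n => Φ (n+1) n, ?_, ?_⟩
  · apply strictMono_nat_of_lt_succ
    intro n
    have h1 : Φ (n+2) (n+1) = Φ (n+1) ((step (n+1) (Φ (n+1))).choose (n+1)) := by
      rw [hΦs (n+1)]; rfl
    calc Φ (n+1) n < Φ (n+1) (n+1) := hΦmono (n+1) (Nat.lt_succ_self n)
      _ ≤ Φ (n+1) ((step (n+1) (Φ (n+1))).choose (n+1)) :=
          (hΦmono (n+1)).monotone (hσle (n+1) (n+1))
      _ = Φ (n+2) (n+1) := h1.symm
  · intro ε hε
    have hεq : (0:ℝ) < ε ^ q := Real.rpow_pos_of_pos hε q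
    have hTnn : (0:ℝ) ≤ (2*C') ^ q := Real.rpow_nonneg (by positivity) q
    obtain ⟨k, hk⟩ := exists_nat_gt ((2*C') ^ q / (ε ^ q / 2))
    have hk1 : (2*C') ^ q / ((k:ℝ)+1) < ε ^ q / 2 := by
      rw [div_lt_iff₀ (by positivity)]
      have h2 : (2*C') ^ q / (ε ^ q / 2) < (k:ℝ) + 1 := hk.trans (lt_add_one _)
      have h3 := (div_lt_iff₀ (by positivity : (0:ℝ) < ε ^ q / 2)).mp h2
      linarith
    set δ : ℝ := (ε ^ q / 2) ^ q⁻¹ with hδdef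
    have hδpos : 0 < δ := Real.rpow_pos_of_pos (by positivity) _
    have hδq : δ ^ q = ε ^ q / 2 := Real.rpow_inv_rpow (by positivity) (ne_of_gt hq')
    obtain ⟨N, hN⟩ := hcauchy k δ hδpos
    refine ⟨max N k, ?_⟩
    intro i hi j hj
    obtain ⟨ri, hri, heqi⟩ := hkey i k (le_trans (le_max_right N k) hi) i
    obtain ⟨rj, hrj, heqj⟩ := hkey j k (le_trans (le_max_right N k) hj) j
    set v : X := u (Φ (i+1) i) - u (Φ (j+1) j) with hvdef
    have hLmv : Lm (m k) v < δ := by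
      rw [hvdef, heqi, heqj]
      exact hN ri (le_trans (le_trans (le_max_left N k) hi) hri)
        rj (le_trans (le_trans (le_max_left N k) hj) hrj)
    have hWv : W v ≤ 2 * C' := by
      have := hWtri (u (Φ (i+1) i)) (u (Φ (j+1) j))
      have h1 := hCbd (Φ (i+1) i)
      have h2 := hCbd (Φ (j+1) j)
      rw [hvdef]; linarith
    have hWvq : W v ^ q ≤ (2*C') ^ q := Real.rpow_le_rpow (hW0 v) hWv hq'.le
    have hsplitv := hm k v
    have hterm1 : 1 / ((k:ℝ)+1) * W v ^ q ≤ (2*C') ^ q / ((k:ℝ)+1) := by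
      rw [one_div, div_eq_inv_mul]
      exact mul_le_mul_of_nonneg_left hWvq (by positivity)
    have hterm2 : Lm (m k) v ^ q ≤ δ ^ q :=
      Real.rpow_le_rpow (hLm0 _ _) hLmv.le hq'.le
    have hLvq : L v ^ q < ε ^ q := by
      rw [hδq] at hterm2
      linarith
    by_contra hcon
    push_neg at hcon
    exact absurd (Real.rpow_le_rpow hε.le hcon hq'.le) (not_le.mpr hLvq)
end

section
/- Let Ψ : [0,∞) × (r₁, R₀] → [0,∞) be nonincreasing in its second slot and nonincreasing in its first slot, and suppose there exist constants C > 0, ε > 0, h₀ ≥ 0, A ≥ 0 such that for all h₂ > h₁ ≥ h₀ and r₁ < r < R ≤ R₀: Ψ(h₂, r) ≤ C[ (R₀−r₁)/((R−r)(h₂−h₁)^ε) + (A + h₂)/(h₂−h₁)^{1+ε} ] Ψ(h₁, R)^{1+ε}. Then there exists h = C'(A + h₀ + Ψ(h₀, R₀)) (for a constant C' depending only on C and ε) such that Ψ(h₀ + h, r₁) = 0. -/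
/-- De Giorgi-type iteration (Proposition 4.4).  Let `Ψ(h, r)` be nonnegative,
nonincreasing in the level `h` and nondecreasing in the radius `r`, satisfying for all
`h₂ > h₁ ≥ h₀` and `r₁ < r < R ≤ R₀` the recursion
`Ψ(h₂, r) ≤ C [ (R₀−r₁)/((R−r)(h₂−h₁)^ε) + (A + h₂)/(h₂−h₁)^{1+ε} ] Ψ(h₁, R)^{1+ε}`.
Then there is a constant `C'` depending only on `C` and `ε` such that, with
`h = C'(A + h₀ + Ψ(h₀, R₀))`, one has `Ψ(h₀ + h, r₁) = 0`. -/
theorem deGiorgi_iteration (C ε : ℝ) (hC : 0 < C) (hε : 0 < ε) :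
    ∃ C' : ℝ, 0 < C' ∧
      ∀ (Ψ : ℝ → ℝ → ℝ) (r₁ R₀ h₀ A : ℝ), r₁ < R₀ → 0 ≤ h₀ → 0 ≤ A →
        (∀ h r, 0 ≤ Ψ h r) →
        (∀ h h' : ℝ, h ≤ h' → ∀ r, Ψ h' r ≤ Ψ h r) →
        (∀ r r' : ℝ, r ≤ r' → ∀ h, Ψ h r ≤ Ψ h r') →
        (∀ h₁ h₂ : ℝ, h₀ ≤ h₁ → h₁ < h₂ → ∀ r R : ℝ, r₁ < r → r < R → R ≤ R₀ →
          Ψ h₂ r ≤ C * ((R₀ - r₁) / ((R - r) * (h₂ - h₁) ^ ε)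
              + (A + h₂) / (h₂ - h₁) ^ (1 + ε)) * Ψ h₁ R ^ (1 + ε)) →
        Ψ (h₀ + C' * (A + h₀ + Ψ h₀ R₀)) r₁ = 0 := by
  have h2p : (0:ℝ) < 2 := two_pos
  have hεne : ε ≠ 0 := ne_of_gt hε
  set K : ℝ := max 1 (3 * C * 2 ^ ((1 + ε) ^ 2 / ε)) with hKdef
  have hK1 : (1:ℝ) ≤ K := le_max_left _ _
  have hKpos : (0:ℝ) < K := lt_of_lt_of_le one_pos hK1
  have hKge : 3 * C * 2 ^ ((1 + ε) ^ 2 / ε) ≤ K := le_max_right _ _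
  refine ⟨K ^ (1/ε), Real.rpow_pos_of_pos hKpos _, ?_⟩
  intro Ψ r₁ R₀ h₀ A hrR hh₀ hA hΨnn hmh hmr hrec
  have hC'pos : 0 < K ^ (1/ε) := Real.rpow_pos_of_pos hKpos _
  have hC'1 : (1:ℝ) ≤ K ^ (1/ε) := Real.one_le_rpow hK1 (by positivity)
  set Ψ₀ := Ψ h₀ R₀ with hΨ₀def
  have hΨ₀nn : 0 ≤ Ψ₀ := hΨnn _ _
  set M := A + h₀ + Ψ₀ with hMdef
  have hMnn : 0 ≤ M := by positivity
  set hh := K ^ (1/ε) * M with hhdef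
  have hhnn : 0 ≤ hh := mul_nonneg hC'pos.le hMnn
  have hupper : Ψ (h₀ + hh) r₁ ≤ Ψ₀ :=
    le_trans (hmh h₀ (h₀ + hh) (by linarith) r₁) (hmr r₁ R₀ hrR.le h₀)
  rcases eq_or_lt_of_le hΨ₀nn with h0 | hΨ₀pos
  · exact le_antisymm (hupper.trans h0.symm.le) (hΨnn _ _)
  have hMpos : 0 < M := by nlinarith
  have hhpos : 0 < hh := mul_pos hC'pos hMpos
  have hMh : M ≤ hh := by nlinarith
  -- power of hh
  have hhpow : hh ^ ε = K * M ^ ε := by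
    rw [hhdef, Real.mul_rpow hC'pos.le hMnn, ← Real.rpow_mul hKpos.le,
      one_div, inv_mul_cancel₀ hεne, Real.rpow_one]
  -- the geometric sequences
  set b : ℕ → ℝ := fun i => (2:ℝ) ^ (-(i:ℝ)) with hbdef
  have hbpos : ∀ i, 0 < b i := fun i => Real.rpow_pos_of_pos h2p _
  have hble : ∀ i, b i ≤ 1 := fun i =>
    Real.rpow_le_one_of_one_le_of_nonpos one_le_two (by simp)
  have hbsucc : ∀ i : ℕ, b (i+1) = b i * 2⁻¹ := by
    intro i
    simp only [hbdef]
    rw [show (-(((i+1):ℕ):ℝ)) = (-(i:ℝ)) + (-1) by push_cast; ring,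
      Real.rpow_add h2p, Real.rpow_neg_one]
  set hs : ℕ → ℝ := fun i => h₀ + hh * (1 - b i) with hhsdef
  set Rs : ℕ → ℝ := fun i => r₁ + b i * (R₀ - r₁) with hRsdef
  have hdiff : ∀ i, hs (i+1) - hs i = hh * b (i+1) := by
    intro i; simp only [hhsdef]; rw [hbsucc i]; ring
  have hRdiff : ∀ i, Rs i - Rs (i+1) = b (i+1) * (R₀ - r₁) := by
    intro i; simp only [hRsdef]; rw [hbsucc i]; ring
  set t : ℝ := (1+ε)/ε with htdef
  clear_value K Ψ₀ M hh b hs Rs t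
  -- the key iteration
  have key : ∀ i : ℕ, Ψ (hs i) (Rs i) ≤ Ψ₀ * 2 ^ (-(i:ℝ) * t) := by
    intro i
    induction i with
    | zero => simpa [hhsdef, hRsdef, hbdef] using hΨ₀def.ge
    | succ i ih =>
      have hRpos : (0:ℝ) < R₀ - r₁ := by linarith
      have hBpos : 0 < b (i+1) := hbpos _
      have hdpos : 0 < hh * b (i+1) := mul_pos hhpos hBpos
      have rm : ∀ a c : ℝ, (2:ℝ)^a * (2:ℝ)^c = 2^(a+c) := fun a c => (Real.rpow_add h2p a c).symm
      have rp : ∀ a c : ℝ, ((2:ℝ)^a)^c = 2^(a*c) := fun a c => (Real.rpow_mul h2p.le a c).symm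
      have hcast : (((i+1):ℕ):ℝ) = (i:ℝ)+1 := by push_cast; ring
      have hBval : b (i+1) = (2:ℝ) ^ (-((i:ℝ)+1)) := by
        simp only [hbdef]; rw [hcast]
      have h1 : h₀ ≤ hs i := by
        simp only [hhsdef]
        linarith [mul_nonneg hhnn (by linarith [hble i] : (0:ℝ) ≤ 1 - b i)]
      have h1' : h₀ ≤ hs (i+1) := by
        simp only [hhsdef]
        linarith [mul_nonneg hhnn (by linarith [hble (i+1)] : (0:ℝ) ≤ 1 - b (i+1))]
      have h2lt : hs i < hs (i+1) := by linarith [hdiff i, hdpos]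
      have hr1 : r₁ < Rs (i+1) := by
        simp only [hRsdef]; linarith [mul_pos hBpos hRpos]
      have hrlt : Rs (i+1) < Rs i := by linarith [hRdiff i, mul_pos hBpos hRpos]
      have hRle : Rs i ≤ R₀ := by
        simp only [hRsdef]
        have e := mul_le_mul_of_nonneg_right (hble i) hRpos.le
        rw [one_mul] at e
        linarith [e]
      have hrec' := hrec (hs i) (hs (i+1)) h1 h2lt (Rs (i+1)) (Rs i) hr1 hrlt hRle
      rw [hdiff i, hRdiff i] at hrec'
      have hAh : 0 ≤ A + hs (i+1) := by linarith
      have hA2 : A + hs (i+1) ≤ 2 * hh := by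
        simp only [hhsdef]
        have e : hh * (1 - b (i+1)) = hh - hh * b (i+1) := by ring
        linarith [mul_nonneg hhnn hBpos.le, hMh, hΨ₀nn, e]
      -- rpow computations
      have hhe : 0 < hh ^ ε := Real.rpow_pos_of_pos hhpos ε
      have hx : (0:ℝ) < 2 ^ ((i:ℝ)+1) := Real.rpow_pos_of_pos h2p _
      have hy : (0:ℝ) < 2 ^ (((i:ℝ)+1)*ε) := Real.rpow_pos_of_pos h2p _
      have hz0 : (0:ℝ) < 2 ^ (((i:ℝ)+1)*(1+ε)) := Real.rpow_pos_of_pos h2p _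
      have hz : (2:ℝ) ^ (((i:ℝ)+1)*(1+ε)) = 2 ^ ((i:ℝ)+1) * 2 ^ (((i:ℝ)+1)*ε) := by
        rw [rm]; congr 1; ring
      have hBinv : b (i+1) = ((2:ℝ) ^ ((i:ℝ)+1))⁻¹ := by
        rw [hBval, Real.rpow_neg h2p.le]
      have eq1 : (hh * b (i+1)) ^ ε = hh ^ ε * ((2:ℝ) ^ (((i:ℝ)+1)*ε))⁻¹ := by
        rw [Real.mul_rpow hhpos.le hBpos.le, hBval, rp,
          show (-((i:ℝ)+1))*ε = -(((i:ℝ)+1)*ε) by ring, Real.rpow_neg h2p.le]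
      have eq2 : (hh * b (i+1)) ^ (1+ε) = hh ^ (1+ε) * ((2:ℝ) ^ (((i:ℝ)+1)*(1+ε)))⁻¹ := by
        rw [Real.mul_rpow hhpos.le hBpos.le, hBval, rp,
          show (-((i:ℝ)+1))*(1+ε) = -(((i:ℝ)+1)*(1+ε)) by ring, Real.rpow_neg h2p.le]
      have eq3 : (Ψ₀ * 2 ^ (-(i:ℝ)*t)) ^ (1+ε)
          = Ψ₀^(1+ε) * 2 ^ (-(i:ℝ)*t*(1+ε)) := by
        rw [Real.mul_rpow hΨ₀nn (Real.rpow_nonneg h2p.le _), rp]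
      have eq4 : hh ^ (1+ε) = hh * hh ^ ε := by
        rw [Real.rpow_add hhpos, Real.rpow_one]
      have eq5 : Ψ₀ ^ (1+ε) = Ψ₀ * Ψ₀ ^ ε := by
        rw [Real.rpow_add hΨ₀pos, Real.rpow_one]
      -- the two terms of the coefficient
      have hT1 : (R₀ - r₁) / (b (i+1) * (R₀ - r₁) * (hh * b (i+1)) ^ ε)
          = 2 ^ (((i:ℝ)+1)*(1+ε)) / hh ^ ε := by
        rw [eq1, hBinv, hz]
        field_simp
      have hT2 : (A + hs (i+1)) / (hh * b (i+1)) ^ (1+ε)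
          ≤ 2 * (2 ^ (((i:ℝ)+1)*(1+ε)) / hh ^ ε) := by
        rw [eq2]
        have hden' : (0:ℝ) < hh ^ (1+ε) * ((2:ℝ) ^ (((i:ℝ)+1)*(1+ε)))⁻¹ :=
          mul_pos (Real.rpow_pos_of_pos hhpos _) (inv_pos.mpr hz0)
        have heq : (2 * hh) / (hh ^ (1+ε) * ((2:ℝ) ^ (((i:ℝ)+1)*(1+ε)))⁻¹)
            = 2 * (2 ^ (((i:ℝ)+1)*(1+ε)) / hh ^ ε) := by
          rw [eq4]
          field_simp
        rw [← heq]
        exact (div_le_div_iff_of_pos_right hden').mpr hA2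
      -- assembling the iteration step
      have hXnn : 0 ≤ (Ψ₀ * 2 ^ (-(i:ℝ)*t)) ^ (1+ε) :=
        Real.rpow_nonneg (mul_nonneg hΨ₀nn (Real.rpow_nonneg h2p.le _)) _
      have hΨpow : Ψ (hs i) (Rs i) ^ (1+ε) ≤ (Ψ₀ * 2 ^ (-(i:ℝ) * t)) ^ (1+ε) :=
        Real.rpow_le_rpow (hΨnn _ _) ih (by linarith)
      have hcoefnn : 0 ≤ C * ((R₀ - r₁) / (b (i+1) * (R₀ - r₁) * (hh * b (i+1)) ^ ε)
          + (A + hs (i+1)) / (hh * b (i+1)) ^ (1 + ε)) :=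
        mul_nonneg hC.le (add_nonneg
          (div_nonneg hRpos.le (mul_nonneg (mul_nonneg hBpos.le hRpos.le)
            (Real.rpow_nonneg hdpos.le _)))
          (div_nonneg hAh (Real.rpow_nonneg hdpos.le _)))
      have hfin : 3*C*2^((1+ε)^2/ε) * Ψ₀^ε ≤ K * M^ε := by
        have e3 : Ψ₀^ε ≤ M^ε := Real.rpow_le_rpow hΨ₀nn (by linarith) hε.le
        exact mul_le_mul hKge e3 (Real.rpow_nonneg hΨ₀nn ε) hKpos.le
      have collect2 : (2:ℝ)^(((i:ℝ)+1)*(1+ε)) * (2:ℝ)^(-(i:ℝ)*t*(1+ε))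
          = 2^((1+ε)^2/ε) * 2^(-((i:ℝ)+1)*t) := by
        rw [rm, rm, htdef]; congr 1; field_simp; ring
      have core : 3*C*(2^(((i:ℝ)+1)*(1+ε))/hh^ε) * (Ψ₀^(1+ε) * 2^(-(i:ℝ)*t*(1+ε)))
          ≤ Ψ₀ * 2 ^ (-((i:ℝ)+1) * t) := by
        rw [show 3*C*(2^(((i:ℝ)+1)*(1+ε))/hh^ε) * (Ψ₀^(1+ε) * 2^(-(i:ℝ)*t*(1+ε)))
            = (3*C*2^(((i:ℝ)+1)*(1+ε)) * (Ψ₀^(1+ε) * 2^(-(i:ℝ)*t*(1+ε))))/hh^ε by ring,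
          div_le_iff₀ hhe, hhpow]
        calc 3*C*2^(((i:ℝ)+1)*(1+ε)) * (Ψ₀^(1+ε) * 2^(-(i:ℝ)*t*(1+ε)))
            = (Ψ₀ * 2^(-((i:ℝ)+1)*t)) * (3*C*2^((1+ε)^2/ε) * Ψ₀^ε) := by
              rw [eq5]; linear_combination (3*C*Ψ₀*Ψ₀^ε) * collect2
          _ ≤ (Ψ₀ * 2^(-((i:ℝ)+1)*t)) * (K * M^ε) :=
              mul_le_mul_of_nonneg_left hfin
                (mul_nonneg hΨ₀nn (Real.rpow_nonneg h2p.le _))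
          _ = Ψ₀ * 2^(-((i:ℝ)+1)*t) * (K * M^ε) := by ring
      rw [hcast]
      calc Ψ (hs (i+1)) (Rs (i+1))
          ≤ C * ((R₀ - r₁) / (b (i+1) * (R₀ - r₁) * (hh * b (i+1)) ^ ε)
              + (A + hs (i+1)) / (hh * b (i+1)) ^ (1 + ε)) * Ψ (hs i) (Rs i) ^ (1 + ε) := hrec'
        _ ≤ C * ((R₀ - r₁) / (b (i+1) * (R₀ - r₁) * (hh * b (i+1)) ^ ε)
              + (A + hs (i+1)) / (hh * b (i+1)) ^ (1 + ε)) * (Ψ₀ * 2 ^ (-(i:ℝ)*t)) ^ (1+ε) :=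
            mul_le_mul_of_nonneg_left hΨpow hcoefnn
        _ ≤ C * (2^(((i:ℝ)+1)*(1+ε))/hh^ε + 2*(2^(((i:ℝ)+1)*(1+ε))/hh^ε))
              * (Ψ₀ * 2 ^ (-(i:ℝ)*t)) ^ (1+ε) :=
            mul_le_mul_of_nonneg_right
              (mul_le_mul_of_nonneg_left (add_le_add hT1.le hT2) hC.le) hXnn
        _ = 3*C*(2^(((i:ℝ)+1)*(1+ε))/hh^ε) * (Ψ₀^(1+ε) * 2^(-(i:ℝ)*t*(1+ε))) := by
            rw [eq3]; ring
        _ ≤ Ψ₀ * 2 ^ (-((i:ℝ)+1) * t) := core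
  -- conclusion
  have final : ∀ i : ℕ, Ψ (h₀ + hh) r₁ ≤ Ψ₀ * 2 ^ (-(i:ℝ) * t) := by
    intro i
    have h1 : hs i ≤ h₀ + hh := by
      simp only [hhsdef]; nlinarith [hbpos i]
    have h2 : r₁ ≤ Rs i := by
      simp only [hRsdef]; nlinarith [hbpos i, hrR]
    exact le_trans (le_trans (hmr r₁ (Rs i) h2 _) (hmh (hs i) (h₀ + hh) h1 (Rs i))) (key i)
  -- the RHS tends to 0
  have htpos : 0 < t := by rw [htdef]; positivity
  have hlim : Filter.Tendsto (fun i : ℕ => Ψ₀ * 2 ^ (-(i:ℝ) * t)) Filter.atTop (nhds 0) := by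
    have hlt : (2:ℝ) ^ (-t) < 1 :=
      Real.rpow_lt_one_of_one_lt_of_neg one_lt_two (by linarith)
    have h0le : (0:ℝ) ≤ (2:ℝ) ^ (-t) := Real.rpow_nonneg (by norm_num) _
    have h1 := (tendsto_pow_atTop_nhds_zero_of_lt_one h0le hlt).const_mul Ψ₀
    rw [mul_zero] at h1
    convert h1 using 2 with i
    rw [show -(i:ℝ)*t = (-t)*(i:ℝ) by ring, Real.rpow_mul (by norm_num : (0:ℝ) ≤ 2),
      Real.rpow_natCast]
  have hle0 : Ψ (h₀ + hh) r₁ ≤ 0 := ge_of_tendsto' hlim final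
  exact le_antisymm hle0 (hΨnn _ _)
end
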